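/- Let k ≥ 1 and h ≥ 1 be natural numbers, and let w_1, …, w_k be integers with each w_r ∈ {0, 1}. Define f : ℕ → ℤ by f(x) = Σ_{r=1}^{k} w_r · Σ_{j=0}^{r} (−1)^{r−j} · C(2j,j) · C(k−j, r−j) · C(x+j, 2j). Then the following are equivalent: (1) for every x ∈ {0, 1, …, k−1}, f(x+1) − f(x) ≡ 2^h (mod 2^{h+1}); (2) there exist integers v_1, …, v_k such that (a) v_j ≡ 2^{h−1} (mod 2^h) for every j whose binary digit sum σ₂(j) equals 1 (i.e. j a power of 2), (b) 2^{h+1−σ₂(j)} divides v_j for every j with 2 ≤ σ₂(j) ≤ h, and (c) for every r ∈ {1, …, k}, w_r ≡ Σ_{j=1}^{k} v_j · C(k−r, j−r) (mod 2^h). -/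

import Mathlib

/-!
Put `u := invBinomialTransform k w`, so that `w` is the binomial transform of `u`. Pascal's
rule turns `f (x + 1) - f x` into `∑ j, C(2j, j) u_j C(x + j, 2j - 1)`, and the matrix
`C(x + j, 2j - 1)` (`0 ≤ x < k`, `1 ≤ j ≤ k`) is unitriangular, so condition (1) can be
compared coefficientwise once `2^h` is written in the same basis: by Lucas' theorem the sum
`∑_{σ₂(j) = 1} C(x + j, 2j - 1)` has exactly one odd term, `j = 2^{ν₂(x+1)}`. By Kummer's
theorem `C(2j, j) = 2^{σ₂(j)} · odd`, so the coefficientwise conditions on `u_j` are exactly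
(a) and (b). These only depend on `u_j` modulo `2^h`, and binomial inversion transfers them to
any `v` with `w ≡ binomialTransform v (mod 2^h)`.
-/

open Finset

namespace Nat

lemma digits_two_sum_two_pow_mul (e m : ℕ) :
    (digits 2 (2 ^ e * m)).sum = (digits 2 m).sum := by
  rcases m.eq_zero_or_pos with rfl | hm
  · simp
  · simp [digits_base_pow_mul one_lt_two hm]

lemma digits_two_sum_pos {n : ℕ} (hn : n ≠ 0) : 0 < (digits 2 n).sum :=
  (pos_of_ne_zero (getLast_digit_ne_zero 2 hn)).trans_le
    (List.le_sum_of_mem (List.getLast_mem (digits_ne_nil_iff_ne_zero.mpr hn)))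

lemma digits_two_sum_eq_one_iff {n : ℕ} : (digits 2 n).sum = 1 ↔ ∃ t, n = 2 ^ t := by
  constructor
  · intro h
    obtain ⟨e, m, hm, rfl⟩ := exists_eq_two_pow_mul_odd (n := n) (by rintro rfl; simp at h)
    rw [digits_two_sum_two_pow_mul, digits_def' one_lt_two hm.pos, odd_iff.mp hm,
      List.sum_cons, add_eq_left] at h
    have : m / 2 = 0 := by_contra fun h' => (digits_two_sum_pos h').ne' h
    exact ⟨e, by rw [show m = 1 by have := hm.pos; omega, mul_one]⟩
  · rintro ⟨t, rfl⟩
    simpa using digits_two_sum_two_pow_mul t 1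

lemma padicValNat_two_choose_two_mul (j : ℕ) :
    padicValNat 2 ((2 * j).choose j) = (digits 2 j).sum := by
  have h := sub_one_mul_padicValNat_choose_eq_sub_sum_digits' (p := 2) (k := j) (n := j)
  have h2 := digits_two_sum_two_pow_mul 1 j
  rw [pow_one] at h2
  rw [← two_mul, h2] at h
  simpa using h

lemma choose_two_mul_eq_two_pow_mul_odd (j : ℕ) :
    ∃ O, Odd O ∧ (2 * j).choose j = 2 ^ (digits 2 j).sum * O := by
  obtain ⟨e, O, hO, he⟩ :=
    exists_eq_two_pow_mul_odd (n := (2 * j).choose j) (choose_pos (by omega)).ne'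
  refine ⟨O, hO, ?_⟩
  have : padicValNat 2 ((2 * j).choose j) = e := by
    rw [he, padicValNat.mul (by positivity) hO.pos.ne', padicValNat.prime_pow,
      padicValNat.eq_zero_of_not_dvd hO.not_two_dvd_nat, add_zero]
  rwa [← padicValNat_two_choose_two_mul, this]

lemma padicValNat_two_add_one_of_odd {x : ℕ} (hx : Odd x) :
    padicValNat 2 (x + 1) = padicValNat 2 (x / 2 + 1) + 1 := by
  rw [show x + 1 = 2 * (x / 2 + 1) by have := odd_iff.mp hx; omega,
    padicValNat.mul two_ne_zero (succ_ne_zero _), padicValNat_self, add_comm]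

lemma odd_choose_add_two_pow_iff (x t : ℕ) :
    Odd ((x + 2 ^ t).choose (2 ^ (t + 1) - 1)) ↔ padicValNat 2 (x + 1) = t := by
  induction t generalizing x with
  | zero =>
    simp [padicValNat.eq_zero_iff, ← even_iff_two_dvd]
  | succ t ih =>
    have lucas := Choose.choose_modEq_choose_mod_mul_choose_div_nat (p := 2)
      (n := x + 2 ^ (t + 1)) (k := 2 ^ (t + 1 + 1) - 1)
    have h2t : 0 < 2 ^ t := by positivity
    rw [show (x + 2 ^ (t + 1)) % 2 = x % 2 by omega,
      show (2 ^ (t + 1 + 1) - 1) % 2 = 1 by omega, choose_one_right,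
      show (x + 2 ^ (t + 1)) / 2 = x / 2 + 2 ^ t by omega,
      show (2 ^ (t + 1 + 1) - 1) / 2 = 2 ^ (t + 1) - 1 by omega] at lucas
    rw [odd_iff, lucas, ← odd_iff, odd_mul, ih]
    rcases x.even_or_odd with hx | hx
    · have hx2 : x % 2 = 0 := even_iff.mp hx
      simp [hx2, padicValNat.eq_zero_of_not_dvd (by omega : ¬ 2 ∣ x + 1)]
    · simp [odd_iff.mp hx, padicValNat_two_add_one_of_odd hx]

lemma odd_sum_choose_of_digits_two_sum_eq_one {k x : ℕ} (hx : x < k) :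
    Odd (∑ j ∈ Icc 1 k with (digits 2 j).sum = 1, (x + j).choose (2 * j - 1)) := by
  rw [odd_sum_iff_odd_card_odd]
  suffices {j ∈ {j ∈ Icc 1 k | (digits 2 j).sum = 1} | Odd ((x + j).choose (2 * j - 1))}
      = {2 ^ padicValNat 2 (x + 1)} by
    rw [this, card_singleton]
    exact odd_one
  ext j
  simp only [mem_filter, mem_Icc, mem_singleton, digits_two_sum_eq_one_iff]
  constructor
  · rintro ⟨⟨-, t, rfl⟩, hodd⟩
    rw [← pow_succ', odd_choose_add_two_pow_iff] at hodd
    rw [hodd]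
  · rintro rfl
    have := le_of_dvd (succ_pos x) (pow_padicValNat_dvd (p := 2) (n := x + 1))
    refine ⟨⟨⟨Nat.one_le_two_pow, by omega⟩, _, rfl⟩, ?_⟩
    rw [← pow_succ', odd_choose_add_two_pow_iff]

end Nat

namespace Int

lemma two_pow_dvd_two_pow_mul_odd_mul_iff {n s : ℕ} {O u : ℤ} (hO : Odd O) :
    2 ^ n ∣ 2 ^ s * O * u ↔ 2 ^ (n - s) ∣ u := by
  have hcop : IsCoprime ((2 : ℤ) ^ n) O := (isCoprime_two_left.mpr hO).pow_left
  rw [mul_right_comm]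
  refine (show _ ↔ 2 ^ n ∣ 2 ^ s * u from
    ⟨hcop.dvd_of_dvd_mul_right, (·.mul_right O)⟩).trans ?_
  rcases le_total s n with hsn | hns
  · obtain ⟨d, rfl⟩ := Nat.exists_eq_add_of_le hsn
    rw [pow_add, Nat.add_sub_cancel_left, mul_dvd_mul_iff_left (by positivity)]
  · rw [Nat.sub_eq_zero_of_le hns, pow_zero]
    exact iff_of_true ((pow_dvd_pow 2 hns).trans (dvd_mul_right _ _)) (one_dvd u)

lemma two_mul_odd_mul_modEq_two_pow_iff {h : ℕ} {O u : ℤ} (hO : Odd O) :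
    2 * O * u ≡ 2 ^ (h + 1) [ZMOD 2 ^ (h + 2)] ↔ u ≡ 2 ^ h [ZMOD 2 ^ (h + 1)] := by
  have hO2 : O * 2 ^ h ≡ 2 ^ h [ZMOD 2 ^ (h + 1)] := by
    obtain ⟨c, rfl⟩ := hO
    exact (Int.modEq_iff_dvd.mpr ⟨-c, by ring⟩)
  calc 2 * O * u ≡ 2 ^ (h + 1) [ZMOD 2 ^ (h + 2)]
      ↔ 2 * (O * u) ≡ 2 * 2 ^ h [ZMOD 2 * 2 ^ (h + 1)] := by
        rw [mul_assoc, ← pow_succ', ← pow_succ']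
    _ ↔ O * u ≡ O * 2 ^ h [ZMOD 2 ^ (h + 1)] := by
      rw [Int.ModEq.mul_left_cancel_iff' two_ne_zero]
      exact ⟨fun h' => h'.trans hO2.symm, fun h' => h'.trans hO2⟩
    _ ↔ u ≡ 2 ^ h [ZMOD 2 ^ (h + 1)] := by
      rw [Int.modEq_iff_dvd, Int.modEq_iff_dvd, ← mul_sub]
      exact ⟨(isCoprime_two_left.mpr hO).pow_left.dvd_of_dvd_mul_left, (·.mul_left O)⟩

end Int

open Nat

def IsAdmissibleCoeff (h j : ℕ) (v : ℤ) : Prop :=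
  ((digits 2 j).sum = 1 → v ≡ 2 ^ (h - 1) [ZMOD 2 ^ h]) ∧
    (2 ≤ (digits 2 j).sum → (digits 2 j).sum ≤ h →
      (2 : ℤ) ^ (h + 1 - (digits 2 j).sum) ∣ v)

lemma choose_two_mul_mul_modEq_iff_isAdmissibleCoeff {h j : ℕ} (hh : 1 ≤ h) (hj : 1 ≤ j)
    (u : ℤ) :
    ((2 * j).choose j : ℤ) * u ≡ (if (digits 2 j).sum = 1 then 2 ^ h else 0) [ZMOD 2 ^ (h + 1)]
      ↔ IsAdmissibleCoeff h j u := by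
  obtain ⟨O, hO, hC⟩ := choose_two_mul_eq_two_pow_mul_odd j
  have hOZ : Odd (O : ℤ) := hO.natCast
  have hs := digits_two_sum_pos (n := j) (by omega)
  rw [hC, IsAdmissibleCoeff]
  push_cast
  by_cases hs1 : (digits 2 j).sum = 1
  · obtain ⟨h, rfl⟩ := Nat.exists_eq_add_of_le' hh
    simp only [hs1, if_true, pow_one, Nat.add_sub_cancel, true_implies,
      show ¬2 ≤ 1 by omega, false_implies, and_true]
    exact Int.two_mul_odd_mul_modEq_two_pow_iff hOZ
  · simp only [hs1, false_implies, true_and, if_false, Int.modEq_zero_iff_dvd,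
      Int.two_pow_dvd_two_pow_mul_odd_mul_iff hOZ]
    refine ⟨fun hu _ _ => hu, fun hu => ?_⟩
    by_cases hsh : (digits 2 j).sum ≤ h
    · exact hu (by omega) hsh
    · rw [Nat.sub_eq_zero_of_le (by omega), pow_zero]
      exact one_dvd u

lemma IsAdmissibleCoeff.of_modEq {h j : ℕ} {u v : ℤ} (hv : IsAdmissibleCoeff h j v)
    (huv : u ≡ v [ZMOD 2 ^ h]) : IsAdmissibleCoeff h j u := by
  refine ⟨fun hs => huv.trans (hv.1 hs), fun hs2 hsh => ?_⟩
  have hpow : (2 : ℤ) ^ (h + 1 - (digits 2 j).sum) ∣ 2 ^ h := pow_dvd_pow 2 (by omega)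
  simpa using dvd_add (hpow.trans huv.symm.dvd) (hv.2 hs2 hsh)

lemma dvd_of_forall_dvd_sum_mul_choose {R : Type*} [CommRing R] {N : R} {k : ℕ} {z : ℕ → R}
    (hz : ∀ x < k, N ∣ ∑ j ∈ Icc 1 k, z j * ((x + j).choose (2 * j - 1) : R)) :
    ∀ j ∈ Icc 1 k, N ∣ z j := by
  intro j
  induction j using Nat.strong_induction_on with
  | _ j ih =>
    intro hj
    have hjk := mem_Icc.mp hj
    -- row `x = j - 1`: the `j`-th entry is `1` and all later entries vanish
    have hsum := hz (j - 1) (by omega)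
    rw [← add_sum_erase _ _ hj, show j - 1 + j = 2 * j - 1 by omega, choose_self, cast_one,
      mul_one] at hsum
    refine (dvd_add_left (dvd_sum fun i hi => ?_)).mp hsum
    obtain ⟨hij, hi⟩ := mem_erase.mp hi
    rcases lt_or_gt_of_ne hij with hlt | hgt
    · exact (ih i hlt hi).mul_right _
    · rw [choose_eq_zero_of_lt (by have := mem_Icc.mp hi; omega), cast_zero, mul_zero]
      exact dvd_zero N

lemma sum_mul_choose_modEq_iff {N : ℤ} {k : ℕ} {a b : ℕ → ℤ} :
    (∀ x < k, ∑ j ∈ Icc 1 k, a j * ((x + j).choose (2 * j - 1) : ℤ)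
        ≡ ∑ j ∈ Icc 1 k, b j * ((x + j).choose (2 * j - 1) : ℤ) [ZMOD N])
      ↔ ∀ j ∈ Icc 1 k, a j ≡ b j [ZMOD N] := by
  simp only [Int.modEq_iff_dvd, ← sum_sub_distrib, ← sub_mul]
  exact ⟨dvd_of_forall_dvd_sum_mul_choose,
    fun h _ _ => dvd_sum fun j hj => (h j hj).mul_right _⟩

section BinomialTransform

variable {R : Type*} [CommRing R]

def binomialTransform (k : ℕ) (v : ℕ → R) (r : ℕ) : R :=
  ∑ j ∈ Icc r k, ((k - r).choose (j - r) : R) * v j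

def invBinomialTransform (k : ℕ) (w : ℕ → R) (j : ℕ) : R :=
  ∑ r ∈ Icc j k, (-1) ^ (r - j) * ((k - j).choose (r - j) : R) * w r

lemma sum_Icc_sum_Icc_comm {M : Type*} [AddCommMonoid M] (m k : ℕ) (F : ℕ → ℕ → M) :
    ∑ j ∈ Icc m k, ∑ r ∈ Icc j k, F j r = ∑ r ∈ Icc m k, ∑ j ∈ Icc m r, F j r :=
  sum_comm' fun j r => by simp only [mem_Icc]; omega

lemma sum_Icc_pow_mul_pow_mul_choose_mul_choose (x y : R) (k : ℕ) {m n : ℕ} (hmn : m ≤ n) :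
    ∑ r ∈ Icc m n, x ^ (r - m) * y ^ (n - r) * ((k - m).choose (r - m) : R)
        * ((k - r).choose (n - r) : R)
      = ((k - m).choose (n - m) : R) * (x + y) ^ (n - m) := by
  obtain ⟨d, rfl⟩ := Nat.exists_eq_add_of_le hmn
  rw [← Ico_add_one_right_eq_Icc, sum_Ico_eq_sum_range, add_pow, mul_sum,
    show m + d + 1 - m = d + 1 by omega, Nat.add_sub_cancel_left]
  refine sum_congr rfl fun a ha => ?_
  have h := congrArg (Nat.cast : ℕ → R)
    (Nat.choose_mul (n := k - m) (k := d) (s := a) (mem_range_succ_iff.mp ha))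
  push_cast at h
  rw [Nat.add_sub_cancel_left, show m + d - (m + a) = d - a by omega,
    show k - (m + a) = k - m - a by omega]
  linear_combination (x ^ a * y ^ (d - a)) * h.symm

lemma sum_Icc_choose_mul_zero_pow_mul {k m : ℕ} (hm : m ≤ k) (g : ℕ → R) :
    ∑ r ∈ Icc m k, ((k - m).choose (r - m) : R) * 0 ^ (r - m) * g r = g m := by
  rw [sum_eq_single_of_mem m (mem_Icc.mpr ⟨le_rfl, hm⟩)]
  · simp
  · intro r hr hrm
    rw [zero_pow (by have := (mem_Icc.mp hr).1; omega), mul_zero, zero_mul]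

lemma binomialTransform_invBinomialTransform {k m : ℕ} (hm : m ≤ k) (w : ℕ → R) :
    binomialTransform k (invBinomialTransform k w) m = w m := by
  simp only [binomialTransform, invBinomialTransform, mul_sum]
  rw [sum_Icc_sum_Icc_comm]
  refine (sum_congr rfl fun r hr => ?_).trans (sum_Icc_choose_mul_zero_pow_mul hm w)
  rw [← add_neg_cancel (1 : R), ← sum_Icc_pow_mul_pow_mul_choose_mul_choose _ _ k
    (mem_Icc.mp hr).1, sum_mul]
  exact sum_congr rfl fun j _ => by ring

lemma invBinomialTransform_binomialTransform {k m : ℕ} (hm : m ≤ k) (v : ℕ → R) :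
    invBinomialTransform k (binomialTransform k v) m = v m := by
  simp only [binomialTransform, invBinomialTransform, mul_sum]
  rw [sum_Icc_sum_Icc_comm]
  refine (sum_congr rfl fun j hj => ?_).trans (sum_Icc_choose_mul_zero_pow_mul hm v)
  rw [← neg_add_cancel (1 : R), ← sum_Icc_pow_mul_pow_mul_choose_mul_choose _ _ k
    (mem_Icc.mp hj).1, sum_mul]
  exact sum_congr rfl fun r _ => by ring

end BinomialTransform

def johnsonEigenvalue (k : ℕ) (w : ℕ → ℤ) (x : ℕ) : ℤ :=
  ∑ r ∈ Icc 1 k, w r * ∑ j ∈ range (r + 1),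
    (-1) ^ (r - j) * ((2 * j).choose j : ℤ) * ((k - j).choose (r - j) : ℤ)
      * ((x + j).choose (2 * j) : ℤ)

lemma choose_succ_add_sub_choose (x : ℕ) {j : ℕ} (hj : 1 ≤ j) :
    ((x + 1 + j).choose (2 * j) : ℤ) - (x + j).choose (2 * j) = (x + j).choose (2 * j - 1) := by
  obtain ⟨i, rfl⟩ := Nat.exists_eq_add_of_le' hj
  rw [show x + 1 + (i + 1) = x + (i + 1) + 1 by ring, show 2 * (i + 1) = 2 * i + 1 + 1 by ring,
    Nat.choose_succ_succ', Nat.add_sub_cancel]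
  push_cast
  ring

lemma johnsonEigenvalue_succ_sub (k : ℕ) (w : ℕ → ℤ) (x : ℕ) :
    johnsonEigenvalue k w (x + 1) - johnsonEigenvalue k w x
      = ∑ j ∈ Icc 1 k, ((2 * j).choose j : ℤ) * invBinomialTransform k w j
          * ((x + j).choose (2 * j - 1) : ℤ) := by
  have hr : ∀ r, w r * ∑ j ∈ range (r + 1), (-1 : ℤ) ^ (r - j) * ((2 * j).choose j : ℤ)
          * ((k - j).choose (r - j) : ℤ) * ((x + 1 + j).choose (2 * j) : ℤ)
        - w r * ∑ j ∈ range (r + 1), (-1 : ℤ) ^ (r - j) * ((2 * j).choose j : ℤ)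
          * ((k - j).choose (r - j) : ℤ) * ((x + j).choose (2 * j) : ℤ)
        = ∑ j ∈ Icc 1 r, w r * ((-1 : ℤ) ^ (r - j) * ((2 * j).choose j : ℤ)
          * ((k - j).choose (r - j) : ℤ) * ((x + j).choose (2 * j - 1) : ℤ)) := by
    intro r
    rw [← mul_sub, ← sum_sub_distrib, range_eq_Ico,
      sum_eq_sum_Ico_succ_bot (by omega : 0 < r + 1), zero_add, Ico_add_one_right_eq_Icc]
    simp only [mul_zero, choose_zero_right, sub_self, zero_add, mul_sum]
    refine sum_congr rfl fun j hj => ?_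
    rw [← choose_succ_add_sub_choose x (mem_Icc.mp hj).1]
    ring
  simp only [johnsonEigenvalue, ← sum_sub_distrib, hr]
  rw [← sum_Icc_sum_Icc_comm]
  refine sum_congr rfl fun j _ => ?_
  rw [invBinomialTransform, mul_sum, sum_mul]
  exact sum_congr rfl fun r _ => by ring

lemma two_pow_modEq_sum_ite_mul_choose {k x : ℕ} (hx : x < k) (h : ℕ) :
    (2 : ℤ) ^ h ≡ ∑ j ∈ Icc 1 k, (if (digits 2 j).sum = 1 then 2 ^ h else 0)
      * ((x + j).choose (2 * j - 1) : ℤ) [ZMOD 2 ^ (h + 1)] := by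
  obtain ⟨c, hc⟩ := (Int.odd_coe_nat _).mpr (odd_sum_choose_of_digits_two_sum_eq_one hx)
  simp only [ite_mul, zero_mul, ← sum_filter, ← mul_sum]
  push_cast at hc
  rw [hc, Int.modEq_iff_dvd]
  exact ⟨c, by ring⟩

lemma forall_johnsonEigenvalue_succ_sub_modEq_iff {k h : ℕ} (hh : 1 ≤ h) (w : ℕ → ℤ) :
    (∀ x < k,
        johnsonEigenvalue k w (x + 1) - johnsonEigenvalue k w x ≡ 2 ^ h [ZMOD 2 ^ (h + 1)])
      ↔ ∀ j ∈ Icc 1 k, IsAdmissibleCoeff h j (invBinomialTransform k w j) := by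
  have hx : ∀ x < k,
      (johnsonEigenvalue k w (x + 1) - johnsonEigenvalue k w x ≡ 2 ^ h [ZMOD 2 ^ (h + 1)] ↔
        ∑ j ∈ Icc 1 k, ((2 * j).choose j * invBinomialTransform k w j : ℤ)
            * ((x + j).choose (2 * j - 1) : ℤ)
          ≡ ∑ j ∈ Icc 1 k, (if (digits 2 j).sum = 1 then 2 ^ h else 0)
            * ((x + j).choose (2 * j - 1) : ℤ) [ZMOD 2 ^ (h + 1)]) := fun x hx => by
    have hpar := two_pow_modEq_sum_ite_mul_choose hx h
    rw [johnsonEigenvalue_succ_sub]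
    exact ⟨fun hd => hd.trans hpar, fun hd => hd.trans hpar.symm⟩
  rw [forall₂_congr hx, sum_mul_choose_modEq_iff]
  exact forall₂_congr fun j hj =>
    choose_two_mul_mul_modEq_iff_isAdmissibleCoeff hh (mem_Icc.mp hj).1 _

lemma forall_isAdmissibleCoeff_iff_exists {k h : ℕ} (w : ℕ → ℤ) :
    (∀ j ∈ Icc 1 k, IsAdmissibleCoeff h j (invBinomialTransform k w j)) ↔
      ∃ v : ℕ → ℤ, (∀ j ∈ Icc 1 k, IsAdmissibleCoeff h j (v j)) ∧
        ∀ r ∈ Icc 1 k, w r ≡ binomialTransform k v r [ZMOD 2 ^ h] := by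
  constructor
  · intro hu
    exact ⟨_, hu, fun r hr => by rw [binomialTransform_invBinomialTransform (mem_Icc.mp hr).2]⟩
  · rintro ⟨v, hv, hw⟩ j hj
    refine (hv j hj).of_modEq ?_
    rw [← invBinomialTransform_binomialTransform (mem_Icc.mp hj).2 v]
    exact Int.ModEq.sum fun r hr =>
      (hw r (Icc_subset_Icc (mem_Icc.mp hj).1 le_rfl hr)).mul_left _

lemma sum_mul_ite_choose_eq_binomialTransform {k r : ℕ} (hr : 1 ≤ r) (v : ℕ → ℤ) :
    ∑ j ∈ Icc 1 k, v j * (if r ≤ j then ((k - r).choose (j - r) : ℤ) else 0)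
      = binomialTransform k v r := by
  have hfilter : {j ∈ Icc 1 k | r ≤ j} = Icc r k := by
    ext j
    simp only [mem_filter, mem_Icc]
    omega
  simp only [mul_ite, mul_zero, ← sum_filter, hfilter, binomialTransform, mul_comm]

theorem stmt_16_general (k h : ℕ) (hh : 1 ≤ h)
    (w : ℕ → ℤ)
    (f : ℕ → ℤ)
    (hf : ∀ x, f x = ∑ r ∈ Finset.Icc 1 k, w r *
        ∑ j ∈ Finset.range (r + 1), (-1 : ℤ) ^ (r - j) *
          (Nat.choose (2 * j) j : ℤ) * (Nat.choose (k - j) (r - j) : ℤ) *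
          (Nat.choose (x + j) (2 * j) : ℤ)) :
    (∀ x < k, f (x + 1) - f x ≡ 2 ^ h [ZMOD 2 ^ (h + 1)]) ↔
      (∃ v : ℕ → ℤ,
        (∀ j, 1 ≤ j → j ≤ k → (Nat.digits 2 j).sum = 1 →
          v j ≡ 2 ^ (h - 1) [ZMOD 2 ^ h]) ∧
        (∀ j, 1 ≤ j → j ≤ k → 2 ≤ (Nat.digits 2 j).sum → (Nat.digits 2 j).sum ≤ h →
          (2 : ℤ) ^ (h + 1 - (Nat.digits 2 j).sum) ∣ v j) ∧
        (∀ r, 1 ≤ r → r ≤ k →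
          w r ≡ ∑ j ∈ Finset.Icc 1 k,
            v j * (if r ≤ j then (Nat.choose (k - r) (j - r) : ℤ) else 0)
              [ZMOD 2 ^ h])) := by
  obtain rfl : f = johnsonEigenvalue k w := funext hf
  rw [forall_johnsonEigenvalue_succ_sub_modEq_iff hh, forall_isAdmissibleCoeff_iff_exists]
  refine exists_congr fun v => ?_
  simp only [IsAdmissibleCoeff, mem_Icc, and_imp, forall_and]
  rw [and_assoc]
  refine and_congr_right' (and_congr_right' (forall₃_congr fun r hr _ => ?_))
  rw [sum_mul_ite_choose_eq_binomialTransform hr]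

/-- Characterization of perfect state transfer at time `π/2^h` on unweighted unions of
distance graphs of the Johnson scheme `J(2k,k)` (0/1 weights `w_r`): the eigenvalue
differences satisfy `f(x+1) - f(x) ≡ 2^h (mod 2^{h+1})` for all `x ∈ {0,…,k-1}` iff
there are integers `v_j` with `v_j ≡ 2^{h-1} (mod 2^h)` when `σ₂(j) = 1`,
`2^{h+1-σ₂(j)} ∣ v_j` when `2 ≤ σ₂(j) ≤ h`, and
`w_r ≡ Σ_{j=1}^k v_j C(k-r, j-r) (mod 2^h)` for all `r ∈ {1,…,k}`. -/
theorem stmt_16 (k h : ℕ) (hk : 1 ≤ k) (hh : 1 ≤ h)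
    (w : ℕ → ℤ) (hw : ∀ r, 1 ≤ r → r ≤ k → w r = 0 ∨ w r = 1)
    (f : ℕ → ℤ)
    (hf : ∀ x, f x = ∑ r ∈ Finset.Icc 1 k, w r *
        ∑ j ∈ Finset.range (r + 1), (-1 : ℤ) ^ (r - j) *
          (Nat.choose (2 * j) j : ℤ) * (Nat.choose (k - j) (r - j) : ℤ) *
          (Nat.choose (x + j) (2 * j) : ℤ)) :
    (∀ x < k, f (x + 1) - f x ≡ 2 ^ h [ZMOD 2 ^ (h + 1)]) ↔
      (∃ v : ℕ → ℤ,
        (∀ j, 1 ≤ j → j ≤ k → (Nat.digits 2 j).sum = 1 →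
          v j ≡ 2 ^ (h - 1) [ZMOD 2 ^ h]) ∧
        (∀ j, 1 ≤ j → j ≤ k → 2 ≤ (Nat.digits 2 j).sum → (Nat.digits 2 j).sum ≤ h →
          (2 : ℤ) ^ (h + 1 - (Nat.digits 2 j).sum) ∣ v j) ∧
        (∀ r, 1 ≤ r → r ≤ k →
          w r ≡ ∑ j ∈ Finset.Icc 1 k,
            v j * (if r ≤ j then (Nat.choose (k - r) (j - r) : ℤ) else 0)
              [ZMOD 2 ^ h])) :=
  stmt_16_general k h hh w f hf
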